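/- Under the setup of the previous statement, if k hidden units are dead on all of D (strictly negative pre-activations), then the Hessian of the empirical loss over D with respect to all parameters θ = (W₁, b₁, W₂, b₂) has rank at most P − k(I + O + 1), where P = H(I+1) + O(H+1) is the total parameter count. -/

import Mathlib

/-!
On the open set of parameters where the `k` dead units have negative pre-activation on every data
point, the network coincides with the network pruned of those units. The pruned loss does not depend
at all on the `k (I + O + 1)` parameters attached to the dead units (their incoming weights, bias and
outgoing weights), so near `θ₀` the gradient of the loss has identically vanishing components in
these coordinates. Hence the corresponding columns of the Hessian at `θ₀` vanish, and the rank is at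
most the number of remaining columns.
-/

/-- Parameters of a two-layer network: `(W₁, b₁, W₂, b₂)`. -/
abbrev TwoLayerParams (I Hn O : ℕ) :=
  (Fin Hn → Fin I → ℝ) × (Fin Hn → ℝ) × (Fin O → Fin Hn → ℝ) × (Fin O → ℝ)

/-- Index set for the individual scalar parameters. -/
abbrev TwoLayerIdx (I Hn O : ℕ) :=
  (Fin Hn × Fin I) ⊕ Fin Hn ⊕ (Fin O × Fin Hn) ⊕ Fin O

/-- Coordinate (basis) vectors in parameter space. -/
def coordVec (I Hn O : ℕ) : TwoLayerIdx I Hn O → TwoLayerParams I Hn O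
  | Sum.inl (h, i) => (fun h' i' => if h' = h ∧ i' = i then 1 else 0, 0, 0, 0)
  | Sum.inr (Sum.inl h) => (0, fun h' => if h' = h then 1 else 0, 0, 0)
  | Sum.inr (Sum.inr (Sum.inl (o, h))) =>
      (0, 0, fun o' h' => if o' = o ∧ h' = h then 1 else 0, 0)
  | Sum.inr (Sum.inr (Sum.inr o)) => (0, 0, 0, fun o' => if o' = o then 1 else 0)

/-- Two-layer ReLU network. -/
noncomputable def twoLayerNet {I Hn O : ℕ} (θ : TwoLayerParams I Hn O) (x : Fin I → ℝ) :
    Fin O → ℝ :=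
  fun o => (∑ h, θ.2.2.1 o h * max 0 ((∑ i, θ.1 h i * x i) + θ.2.1 h)) + θ.2.2.2 o

open Finset

section Calculus

variable {𝕜 E F : Type*} [NontriviallyNormedField 𝕜] [NormedAddCommGroup E] [NormedSpace 𝕜 E]
  [NormedAddCommGroup F] [NormedSpace 𝕜 F]

theorem fderiv_apply_eq_zero_of_add_smul_eq {f : E → F} {v : E}
    (hf : ∀ x (t : 𝕜), f (x + t • v) = f x) (x : E) : fderiv 𝕜 f x v = 0 := by
  by_cases hd : DifferentiableAt 𝕜 f x
  · rw [← hd.lineDeriv_eq_fderiv, lineDeriv]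
    simp only [hf, deriv_const']
  · rw [fderiv_zero_of_not_differentiableAt hd]
    rfl

theorem fderiv_fderiv_apply_eq_zero_of_eqOn {f g : E → F} {U : Set E} {v x : E} (hU : IsOpen U)
    (hfg : Set.EqOn f g U) (hg : ∀ y (t : 𝕜), g (y + t • v) = g y) (hx : x ∈ U) :
    fderiv 𝕜 (fun y => fderiv 𝕜 f y v) x = 0 := by
  have hvanish : (fun y => fderiv 𝕜 f y v) =ᶠ[nhds x] fun _ => 0 := by
    filter_upwards [hU.mem_nhds hx] with y hy
    rw [(hfg.eventuallyEq_of_mem (hU.mem_nhds hy)).fderiv_eq]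
    exact fderiv_apply_eq_zero_of_add_smul_eq hg y
  rw [hvanish.fderiv_eq, fderiv_const_apply]

end Calculus

section TwoLayerNet

variable {I Hn O : ℕ}

def preActivation (θ : TwoLayerParams I Hn O) (x : Fin I → ℝ) (j : Fin Hn) : ℝ :=
  (∑ i, θ.1 j i * x i) + θ.2.1 j

noncomputable def prunedNet (D : Finset (Fin Hn)) (θ : TwoLayerParams I Hn O) (x : Fin I → ℝ) :
    Fin O → ℝ :=
  fun o => (∑ h ∈ Dᶜ, θ.2.2.1 o h * max 0 (preActivation θ x h)) + θ.2.2.2 o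

theorem twoLayerNet_eq_prunedNet {D : Finset (Fin Hn)} {θ : TwoLayerParams I Hn O}
    {x : Fin I → ℝ} (hx : ∀ j ∈ D, preActivation θ x j < 0) :
    twoLayerNet θ x = prunedNet D θ x := by
  funext o
  rw [twoLayerNet, prunedNet, add_left_inj]
  refine (Finset.sum_subset (subset_univ _) fun h _ hh => ?_).symm
  exact mul_eq_zero_of_right _ (max_eq_left (hx h (by simpa using hh)).le)

def deadRegion {ι : Type*} (D : Finset (Fin Hn)) (xs : ι → Fin I → ℝ) :
    Set (TwoLayerParams I Hn O) :=
  {θ | ∀ j ∈ D, ∀ n, preActivation θ (xs n) j < 0}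

theorem isOpen_deadRegion {ι : Type*} [Finite ι] (D : Finset (Fin Hn)) (xs : ι → Fin I → ℝ) :
    IsOpen (deadRegion (O := O) D xs) := by
  simp only [deadRegion, Set.ofPred_forall]
  exact isOpen_biInter_finset fun j _ => isOpen_iInter_of_finite fun n =>
    isOpen_lt (by unfold preActivation; fun_prop) continuous_const

/-- The incoming weights, biases and outgoing weights of the hidden units in `D`. -/
def deadParams (D : Finset (Fin Hn)) : Finset (TwoLayerIdx I Hn O) :=
  (D ×ˢ univ).disjSum (D.disjSum ((univ ×ˢ D).disjSum ∅))

theorem card_deadParams (D : Finset (Fin Hn)) :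
    (deadParams (I := I) (O := O) D).card = D.card * (I + O + 1) := by
  simp only [deadParams, card_disjSum, card_product, card_univ, Fintype.card_fin, card_empty]
  ring

theorem card_twoLayerIdx : Fintype.card (TwoLayerIdx I Hn O) = Hn * (I + 1) + O * (Hn + 1) := by
  simp only [Fintype.card_sum, Fintype.card_prod, Fintype.card_fin]
  ring

theorem prunedNet_add_smul_coordVec {D : Finset (Fin Hn)} {a : TwoLayerIdx I Hn O}
    (ha : a ∈ deadParams D) (θ : TwoLayerParams I Hn O) (t : ℝ) (x : Fin I → ℝ) :
    prunedNet D (θ + t • coordVec I Hn O a) x = prunedNet D θ x := by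
  funext o
  rcases a with ⟨j, i⟩ | j | ⟨o', j⟩ | o' <;>
    simp only [deadParams, inl_mem_disjSum, inr_mem_disjSum, mem_product, mem_univ, and_true,
      true_and, notMem_empty] at ha
  all_goals
    simp only [prunedNet, preActivation, coordVec]
    refine congrArg₂ (· + ·) (sum_congr rfl fun h hh => ?_) (by simp)
    have hne : h ≠ j := fun e => mem_compl.1 hh (e ▸ ha)
    simp [hne]

end TwoLayerNet

theorem dead_neurons_bound_hessian_rank_general
    (I Hn O Nd : ℕ)
    (L : (Fin O → ℝ) → (Fin O → ℝ) → ℝ)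
    (data : Fin Nd → (Fin I → ℝ) × (Fin O → ℝ))
    (θ₀ : TwoLayerParams I Hn O)
    (Dset : Finset (Fin Hn)) (k : ℕ) (hk : Dset.card = k)
    (hdead : ∀ j ∈ Dset, ∀ n : Fin Nd,
      (∑ i, θ₀.1 j i * (data n).1 i) + θ₀.2.1 j < 0) :
    (Matrix.rank (fun a b : TwoLayerIdx I Hn O =>
        fderiv ℝ
          (fun θ => fderiv ℝ
            (fun θ' : TwoLayerParams I Hn O =>
              ∑ n, L (twoLayerNet θ' (data n).1) (data n).2) θ (coordVec I Hn O b))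
          θ₀ (coordVec I Hn O a))) ≤
      (Hn * (I + 1) + O * (Hn + 1)) - k * (I + O + 1) := by
  have hagree : Set.EqOn (fun θ => ∑ n, L (twoLayerNet θ (data n).1) (data n).2)
      (fun θ => ∑ n, L (prunedNet Dset θ (data n).1) (data n).2)
      (deadRegion Dset fun n => (data n).1) := fun θ hθ => by
    simp only [twoLayerNet_eq_prunedNet fun j hj => hθ j hj _]
  have hcol : ∀ b ∈ deadParams Dset, ∀ a,
      fderiv ℝ (fun θ => fderiv ℝ (fun θ' : TwoLayerParams I Hn O =>
        ∑ n, L (twoLayerNet θ' (data n).1) (data n).2) θ (coordVec I Hn O b))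
        θ₀ (coordVec I Hn O a) = 0 := fun b hb a => by
    rw [fderiv_fderiv_apply_eq_zero_of_eqOn (isOpen_deadRegion _ _) hagree
      (fun θ t => by simp only [prunedNet_add_smul_coordVec hb]) hdead]
    rfl
  calc _ = Matrix.rank (Matrix.transpose _) := (Matrix.rank_transpose _).symm
    _ ≤ (deadParams Dset)ᶜ.card := Matrix.rank_le_card_of_support_subset _ _ <|
        Function.support_subset_iff'.2 fun b hb => funext (hcol b (by simpa using hb))
    _ = _ := by rw [card_compl, card_twoLayerIdx, card_deadParams, hk]

/-- If `k` hidden units are dead on the whole dataset, then the Hessian of the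
empirical loss has rank at most `P − k(I + O + 1)` with `P = Hn(I+1) + O(Hn+1)`. -/
theorem dead_neurons_bound_hessian_rank
    (I Hn O Nd : ℕ)
    (L : (Fin O → ℝ) → (Fin O → ℝ) → ℝ)
    (hL : ∀ y, ContDiff ℝ 2 (fun z => L z y))
    (data : Fin Nd → (Fin I → ℝ) × (Fin O → ℝ))
    (θ₀ : TwoLayerParams I Hn O)
    (Dset : Finset (Fin Hn)) (k : ℕ) (hk : Dset.card = k)
    (hdead : ∀ j ∈ Dset, ∀ n : Fin Nd,
      (∑ i, θ₀.1 j i * (data n).1 i) + θ₀.2.1 j < 0) :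
    (Matrix.rank (fun a b : TwoLayerIdx I Hn O =>
        fderiv ℝ
          (fun θ => fderiv ℝ
            (fun θ' : TwoLayerParams I Hn O =>
              ∑ n, L (twoLayerNet θ' (data n).1) (data n).2) θ (coordVec I Hn O b))
          θ₀ (coordVec I Hn O a))) ≤
      (Hn * (I + 1) + O * (Hn + 1)) - k * (I + O + 1) :=
  dead_neurons_bound_hessian_rank_general I Hn O Nd L data θ₀ Dset k hk hdead
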